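/- arXiv:1411.6583 — 7 statements merged into one kernel-verified Lean document; each statement's English description precedes it below -/
import Mathlib

section
/- (Korselt's Criterion) For every natural number n ≥ 1: the congruence a^n ≡ a (mod n) holds for all integers a if and only if n is squarefree and for every prime p dividing n, p − 1 divides n − 1. -/
/-- Korselt's Criterion: for `n ≥ 1`, `a ^ n ≡ a (mod n)` for all integers `a`
iff `n` is squarefree and `p - 1 ∣ n - 1` for every prime `p ∣ n`. -/
theorem korselt_criterion (n : ℕ) (hn : 1 ≤ n) :
    (∀ a : ℤ, (n : ℤ) ∣ a ^ n - a) ↔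
      (Squarefree n ∧ ∀ p : ℕ, p.Prime → p ∣ n → p - 1 ∣ n - 1) := by
  constructor
  · intro h
    constructor
    · rw [Nat.squarefree_iff_prime_squarefree]
      intro p hp hpp
      have h4 : 4 ≤ n := le_trans (by nlinarith [hp.two_le]) (Nat.le_of_dvd hn hpp)
      have h1 : ((p : ℤ) * p) ∣ (p : ℤ) ^ n - p := by
        exact_mod_cast dvd_trans (by exact_mod_cast hpp) (h p)
      have h2 : ((p : ℤ) * p) ∣ (p : ℤ) ^ n := by
        rw [← sq]
        exact pow_dvd_pow _ (by omega)
      have h3 : ((p : ℤ) * p) ∣ (p : ℤ) := by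
        have := dvd_sub h2 h1
        simpa using this
      have := Int.le_of_dvd (by exact_mod_cast hp.pos) h3
      nlinarith [hp.two_le]
    · intro p hp hpn
      haveI : Fact p.Prime := ⟨hp⟩
      obtain ⟨g, hg⟩ := IsCyclic.exists_generator (α := (ZMod p)ˣ)
      have hord : orderOf g = p - 1 := by
        rw [orderOf_eq_card_of_forall_mem_zpowers hg, Nat.card_eq_fintype_card, ZMod.card_units]
      set a : ℤ := ((g : ZMod p).val : ℤ) with ha
      have hpd : (p : ℤ) ∣ a ^ n - a :=
        dvd_trans (by exact_mod_cast hpn) (h a)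
      have hmod : (a : ZMod p) ^ n = (a : ZMod p) := by
        have := (ZMod.intCast_zmod_eq_zero_iff_dvd _ p).2 hpd
        push_cast at this
        linear_combination this
      have hac : (a : ZMod p) = (g : ZMod p) := by
        simp [ha]
      rw [hac] at hmod
      have hgu : g ^ n = g := Units.ext (by push_cast; exact hmod)
      have hg1 : g ^ (n - 1) = 1 := by
        have h2 : g ^ (n - 1) * g = 1 * g := by
          rw [one_mul, ← pow_succ, Nat.sub_add_cancel hn]
          exact hgu
        exact mul_right_cancel h2
      rw [← hord]
      exact orderOf_dvd_of_pow_eq_one hg1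
  · rintro ⟨hsf, hdvd⟩ a
    have hnm : ((n : ℤ)).natAbs ∣ (a ^ n - a).natAbs := by
      rw [Int.natAbs_natCast]
      have hprod := Nat.prod_primeFactors_of_squarefree hsf
      conv_lhs => rw [← hprod]
      apply Finset.prod_primes_dvd
      · intro p hps
        exact (Nat.prime_of_mem_primeFactors hps).prime
      · intro p hps
        have hp := Nat.prime_of_mem_primeFactors hps
        have hpn := Nat.dvd_of_mem_primeFactors hps
        haveI : Fact p.Prime := ⟨hp⟩
        suffices hz : (p : ℤ) ∣ a ^ n - a by
          simpa using Int.natAbs_dvd_natAbs.2 hz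
        rw [← ZMod.intCast_zmod_eq_zero_iff_dvd]
        push_cast
        have key : (a : ZMod p) ^ n = (a : ZMod p) := by
          by_cases hz : (a : ZMod p) = 0
          · rw [hz, zero_pow (by omega)]
          · obtain ⟨k, hk⟩ := hdvd p hp hpn
            have h1 : (a : ZMod p) ^ (p - 1) = 1 := ZMod.pow_card_sub_one_eq_one hz
            calc (a : ZMod p) ^ n = (a : ZMod p) ^ (n - 1) * (a : ZMod p) := by
                  rw [← pow_succ, Nat.sub_add_cancel hn]
              _ = (a : ZMod p) := by
                  rw [hk, pow_mul, h1, one_pow, one_mul]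
        linear_combination key
    exact Int.natAbs_dvd_natAbs.1 (by simpa using hnm)
end

section
/- Let L ≥ 2 be a natural number and let λ denote the exponent of the multiplicative group of units (ℤ/Lℤ)ˣ (the maximal multiplicative order of an element mod L). Then every multiset of elements of (ℤ/Lℤ)ˣ whose cardinality is at least λ·(1 + log(L/λ)) contains a nonempty sub-multiset whose product of elements equals 1. -/
/-!
Let `m` be the exponent of a finite abelian group `G` and let `g₁, …, gₙ` have no nonempty
subproduct equal to `1`. Then for all weights `wᵢ` the coefficient of `1` in
`∏ (1 + wᵢ gᵢ) ∈ ℂ[G]` is `1`, so this element is not killed by all `|G|` characters of `G`.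
On the other hand, characters take values in the `m`-th roots of unity, so choosing
`w₁ = -z⁻¹` for the most frequent value `z` of `χ(g₁)` kills at least one and at least a
`1/m`-th of any given set of characters. Iterating greedily kills every character as soon as
`|G| < annihilationBound m n`, a quantity which is at least `m (m/(m-1))^(n+1-m)`; hence
`m exp (n/m - 1) ≤ |G|`. For `G = (ℤ/Lℤ)ˣ` we have `|G| = φ(L) < L`, while
`n ≥ m (1 + log (L/m))` forces `m exp (n/m - 1) ≥ L`.
-/

open Finset Polynomial Real

noncomputable def annihilationBound (m : ℕ) : ℕ → ℝ
  | 0 => 1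
  | n + 1 => max (annihilationBound m n + 1) (annihilationBound m n / (1 - (m : ℝ)⁻¹))

section annihilationBound

variable {m : ℕ}

lemma add_one_le_annihilationBound (n : ℕ) : (n : ℝ) + 1 ≤ annihilationBound m n := by
  induction n with
  | zero => simp [annihilationBound]
  | succ n ih =>
    push_cast
    exact (add_le_add_left ih 1).trans (le_max_left _ _)

lemma sub_lt_annihilationBound {n : ℕ} {x y : ℝ} (hx : x < annihilationBound m (n + 1))
    (hy : 1 ≤ y) (hxy : x ≤ m * y) : x - y < annihilationBound m n := by
  have hc : 0 < annihilationBound m n :=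
    lt_of_lt_of_le (by positivity) (add_one_le_annihilationBound n)
  rcases lt_max_iff.mp hx with hx | hx
  · linarith
  rcases le_or_gt (1 - (m : ℝ)⁻¹) 0 with hm | hm
  · linarith [div_nonpos_of_nonneg_of_nonpos hc.le hm]
  · have hxm : x * (m : ℝ)⁻¹ ≤ y := by
      rcases (Nat.cast_nonneg (α := ℝ) m).eq_or_lt with hm0 | hm0
      · rw [← hm0] at hxy ⊢
        simp only [inv_zero, mul_zero]
        linarith
      · rw [← div_eq_mul_inv, div_le_iff₀ hm0]
        linarith
    linarith [(lt_div_iff₀ hm).mp hx]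

lemma annihilationBound_mul_exp_le (hm : 2 ≤ m) (k j : ℕ) :
    annihilationBound m k * exp (j / m) ≤ annihilationBound m (k + j) := by
  have hm' : (2 : ℝ) ≤ m := by exact_mod_cast hm
  have hexp : exp (m : ℝ)⁻¹ ≤ 1 / (1 - (m : ℝ)⁻¹) :=
    exp_bound_div_one_sub_of_interval (by positivity) (inv_lt_one_of_one_lt₀ (by linarith))
  induction j with
  | zero => simp
  | succ j ih =>
    have hc : 0 ≤ annihilationBound m (k + j) :=
      le_trans (by positivity) (add_one_le_annihilationBound _)
    calc annihilationBound m k * exp ((j + 1 : ℕ) / m)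
        = annihilationBound m k * exp (j / m) * exp (m : ℝ)⁻¹ := by
          rw [mul_assoc, ← exp_add]; push_cast; ring_nf
      _ ≤ annihilationBound m (k + j) * (1 / (1 - (m : ℝ)⁻¹)) := by gcongr
      _ ≤ annihilationBound m (k + (j + 1)) := by
          rw [mul_one_div]; exact le_max_right _ _

lemma mul_exp_le_annihilationBound (hm : 2 ≤ m) {n : ℕ} (hn : m ≤ n + 1) :
    m * exp (n / m - 1) ≤ annihilationBound m n := by
  obtain ⟨j, rfl⟩ : ∃ j, n = (m - 1) + j := ⟨n + 1 - m, by omega⟩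
  have hm' : (0 : ℝ) < m := by positivity
  have hbase : (m : ℝ) ≤ annihilationBound m (m - 1) := by
    simpa [Nat.cast_sub (by omega : 1 ≤ m)] using add_one_le_annihilationBound (m := m) (m - 1)
  have hexp : ((m - 1 + j : ℕ) : ℝ) / m - 1 ≤ j / m := by
    rw [Nat.cast_add, Nat.cast_sub (by omega : 1 ≤ m), div_sub_one hm'.ne']
    gcongr
    linarith
  calc (m : ℝ) * exp (((m - 1 + j : ℕ) : ℝ) / m - 1)
      ≤ annihilationBound m (m - 1) * exp (j / m) :=
        mul_le_mul hbase (exp_le_exp.2 hexp) (exp_pos _).le (hm'.le.trans hbase)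
    _ ≤ annihilationBound m (m - 1 + j) := annihilationBound_mul_exp_le hm _ _

end annihilationBound

lemma Polynomial.card_nthRootsFinset_le {R : Type*} [CommRing R] [IsDomain R] (n : ℕ) (a : R) :
    #(nthRootsFinset n a) ≤ n := by
  classical
  rw [nthRootsFinset_def]
  exact (Multiset.toFinset_card_le _).trans (card_nthRoots n a)

theorem exists_forall_prod_one_add_mul_eq_zero {ι K : Type*} [Field K] {m n : ℕ} (hm : 0 < m)
    (f : Fin n → ι → K) (hf : ∀ i v, f i v ^ m = 1) (V : Finset ι)
    (hV : (#V : ℝ) < annihilationBound m n) :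
    ∃ w : Fin n → K, ∀ v ∈ V, ∏ i, (1 + w i * f i v) = 0 := by
  classical
  induction n generalizing V with
  | zero =>
    have hV : V = ∅ := by simpa [annihilationBound] using hV
    exact ⟨0, by simp [hV]⟩
  | succ n ih =>
    rcases V.eq_empty_or_nonempty with rfl | hV₀
    · exact ⟨0, by simp⟩
    have hm' : (0 : ℝ) < m := by exact_mod_cast hm
    -- the most frequent value `z` of `f 0` on `V` is taken by at least `#V / m` points
    obtain ⟨z, hz, hzV⟩ := exists_le_card_fiber_of_nsmul_le_card_of_maps_to
      (fun v _ ↦ (mem_nthRootsFinset hm (1 : K)).2 (hf 0 v)) ⟨1, one_mem_nthRootsFinset hm⟩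
      (b := (#V : ℝ) / m) (by
        rw [nsmul_eq_mul, mul_div_assoc', div_le_iff₀ hm', mul_comm]
        gcongr
        exact_mod_cast card_nthRootsFinset_le m (1 : K))
    have hF : (1 : ℝ) ≤ #{v ∈ V | f 0 v = z} := by
      have : (0 : ℝ) < #{v ∈ V | f 0 v = z} := lt_of_lt_of_le (by positivity) hzV
      exact_mod_cast this
    have hsplit := card_filter_add_card_filter_not (s := V) (f 0 · = z)
    obtain ⟨w, hw⟩ := ih (fun i ↦ f i.succ) (fun i ↦ hf i.succ) {v ∈ V | f 0 v ≠ z} (by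
      rw [show (#{v ∈ V | f 0 v ≠ z} : ℝ) = #V - #{v ∈ V | f 0 v = z} by
        rw [← hsplit]; push_cast; ring]
      exact sub_lt_annihilationBound hV hF ((div_le_iff₀' hm').mp hzV))
    refine ⟨Fin.cons (-z⁻¹) w, fun v hv ↦ ?_⟩
    rw [Fin.prod_univ_succ, Fin.cons_zero]
    simp only [Fin.cons_succ]
    by_cases hvz : f 0 v = z
    · have hz₀ : z ≠ 0 := ne_zero_of_mem_nthRootsFinset one_ne_zero hz
      rw [hvz, neg_mul, inv_mul_cancel₀ hz₀, add_neg_cancel, zero_mul]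
    · rw [hw v (mem_filter.2 ⟨hv, hvz⟩), mul_zero]

section Characters

variable {G K : Type*} [CommGroup G] [Field K]

lemma prod_one_add_mul_apply {ι : Type*} (χ : G →* Kˣ) (s : Finset ι) (w : ι → K) (g : ι → G) :
    ∏ i ∈ s, (1 + w i * χ (g i)) = ∑ t ∈ s.powerset, (∏ i ∈ t, w i) * χ (∏ i ∈ t, g i) := by
  rw [prod_one_add]
  refine sum_congr rfl fun t _ ↦ ?_
  rw [prod_mul_distrib, map_prod, Units.coe_prod]

variable (G K) in
lemma linearIndependent_apply_monoidHom [Finite G] [HasEnoughRootsOfUnity K (Monoid.exponent G)] :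
    LinearIndependent K fun (x : G) (χ : G →* Kˣ) ↦ (χ x : K) :=
  (linearIndependent_monoidHom (G →* Kˣ) K).comp
    (fun x ↦ (Units.coeHom K).comp (MonoidHom.eval x))
    fun _ _ h ↦ (CommGroup.forall_apply_eq_apply_iff G).1 fun χ ↦ Units.ext (DFunLike.congr_fun h χ)

theorem annihilationBound_le_card [Fintype G] {n : ℕ} (g : Fin n → G)
    (hg : ∀ t : Finset (Fin n), ∏ i ∈ t, g i = 1 → t = ∅) :
    annihilationBound (Monoid.exponent G) n ≤ Fintype.card G := by
  classical
  by_contra! hlt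
  have : NeZero (Monoid.exponent G) := ⟨Monoid.exponent_ne_zero_of_finite⟩
  have hcard := CommGroup.card_monoidHom_of_hasEnoughRootsOfUnity G ℂ
  have : Finite (G →* ℂˣ) := Nat.finite_of_card_ne_zero (by rw [hcard]; exact Nat.card_pos.ne')
  let _ := Fintype.ofFinite (G →* ℂˣ)
  obtain ⟨w, hw⟩ := exists_forall_prod_one_add_mul_eq_zero (NeZero.pos _)
    (fun i (χ : G →* ℂˣ) ↦ (χ (g i) : ℂ))
    (fun i χ ↦ by rw [← Units.val_pow_eq_pow_val, ← map_pow, Monoid.pow_exponent_eq_one,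
      map_one, Units.val_one]) univ
    (by rwa [card_univ, ← Nat.card_eq_fintype_card, hcard, Nat.card_eq_fintype_card])
  -- `a x` is the coefficient of `x` in `∏ i, (1 + w i • g i)` in the group algebra `ℂ[G]`
  set a : G → ℂ := fun x ↦ ∑ t ∈ univ.powerset with ∏ i ∈ t, g i = x, ∏ i ∈ t, w i
  have ha : ∑ x, a x • (fun χ : G →* ℂˣ ↦ (χ x : ℂ)) = 0 := by
    ext χ
    simp only [Finset.sum_apply, Pi.smul_apply, smul_eq_mul, Pi.zero_apply, a, sum_mul]
    rw [← hw χ (mem_univ χ), prod_one_add_mul_apply, ← sum_fiberwise _ (fun t ↦ ∏ i ∈ t, g i)]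
    refine sum_congr rfl fun x _ ↦ sum_congr rfl fun t ht ↦ ?_
    rw [(mem_filter.1 ht).2]
  have ha₁ : a 1 = 1 := by
    have : {t ∈ (univ : Finset (Fin n)).powerset | ∏ i ∈ t, g i = 1} = {∅} := by
      ext t
      simp only [mem_filter, mem_powerset, subset_univ, true_and, mem_singleton]
      exact ⟨hg t, by rintro rfl; exact prod_empty⟩
    simp only [a]
    rw [this, sum_singleton, prod_empty]
  exact one_ne_zero <| ha₁ ▸
    Fintype.linearIndependent_iff.1 (linearIndependent_apply_monoidHom G ℂ) a ha 1

theorem mul_exp_le_card_of_forall_prod_ne_one [Fintype G] (S : Multiset G)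
    (hS : ∀ T ≤ S, T ≠ 0 → T.prod ≠ 1) :
    (Monoid.exponent G : ℝ) * exp (Multiset.card S / Monoid.exponent G - 1) ≤ Fintype.card G := by
  set m := Monoid.exponent G
  have hm : 0 < m := Nat.pos_of_ne_zero Monoid.exponent_ne_zero_of_finite
  rcases lt_or_ge (Multiset.card S) m with hn | hn
  · have hm' : (0 : ℝ) < m := by exact_mod_cast hm
    calc (m : ℝ) * exp (Multiset.card S / m - 1) ≤ m * 1 := by
          gcongr
          rw [exp_le_one_iff, sub_nonpos, div_le_one hm']
          exact_mod_cast hn.le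
      _ ≤ Fintype.card G := by
          rw [mul_one]
          exact_mod_cast Nat.le_of_dvd Fintype.card_pos Group.exponent_dvd_card
  have hm₂ : 2 ≤ m := by
    obtain ⟨x, hx⟩ := Multiset.card_pos_iff_exists_mem.1 (hm.trans_le hn)
    have : Nontrivial G := ⟨⟨x, 1, fun h ↦ hS {x} (Multiset.singleton_le.2 hx)
      (Multiset.singleton_ne_zero x) (by simp [h])⟩⟩
    exact Monoid.one_lt_exponent
  refine (mul_exp_le_annihilationBound hm₂ (by omega)).trans ?_
  rw [← Multiset.length_toList S]
  refine annihilationBound_le_card S.toList.get fun t ht ↦ ?_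
  by_contra ht₀
  have hle : t.val.map S.toList.get ≤ S :=
    calc t.val.map S.toList.get ≤ univ.val.map S.toList.get :=
          Multiset.map_le_map (val_le_iff.2 (subset_univ t))
      _ = S := by rw [Fin.univ_val_map, List.ofFn_get, Multiset.coe_toList]
  exact hS _ hle (by simpa using ht₀) (by rwa [prod_map_val])

end Characters

/-- (van Emde Boas–Kruyswijk / Meshulam) If `λ` is the exponent of `(ℤ/Lℤ)ˣ`, then any
multiset of elements of `(ℤ/Lℤ)ˣ` of cardinality at least `λ * (1 + log (L / λ))`
contains a nonempty sub-multiset whose product is `1`. -/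
theorem davenport_bound (L : ℕ) (hL : 2 ≤ L)
    (M : Multiset (ZMod L)ˣ)
    (hM : (Monoid.exponent (ZMod L)ˣ : ℝ) *
        (1 + Real.log ((L : ℝ) / (Monoid.exponent (ZMod L)ˣ : ℝ))) ≤ (Multiset.card M : ℝ)) :
    ∃ M' ≤ M, M' ≠ 0 ∧ M'.prod = 1 := by
  have : NeZero L := ⟨by omega⟩
  by_contra! hM'
  set m := Monoid.exponent (ZMod L)ˣ
  have hm : (0 : ℝ) < m := by exact_mod_cast Nat.pos_of_ne_zero Monoid.exponent_ne_zero_of_finite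
  have hcard : (Fintype.card (ZMod L)ˣ : ℝ) < L := by
    rw [ZMod.card_units_eq_totient]
    exact_mod_cast Nat.totient_lt L hL
  have hlog : log (L / m) ≤ Multiset.card M / m - 1 := by
    rw [le_sub_iff_add_le, le_div_iff₀ hm]
    linarith
  have hLexp : (L : ℝ) ≤ m * exp (Multiset.card M / m - 1) :=
    calc (L : ℝ) = m * exp (log (L / m)) := by
          rw [exp_log (by positivity)]
          field_simp
      _ ≤ m * exp (Multiset.card M / m - 1) := by gcongr
  linarith [mul_exp_le_card_of_forall_prod_ne_one M hM']
end

section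
/- Let L ≥ 2 be a natural number, and let N be a positive integer with the property that every multiset of N elements of (ℤ/Lℤ)ˣ contains a nonempty sub-multiset whose product is 1. Let r and t be integers with r > t > N, and let S be a finite set of r distinct elements of (ℤ/Lℤ)ˣ. Then the number of distinct subsets of S of cardinality at most t and at least t − N whose product of elements equals 1 is at least (r choose t)/(r choose N). -/
open scoped Classical

/-!
Greedily removing nonempty product-one subsets shows that every `t`-subset `T` of `S` contains a
product-one subset `U` with `|T| ≤ |U| + N`. Each such `U` lies in at most
`C(r - |U|, t - |U|) ≤ C(r, N)` of the `C(r, t)` subsets of size `t`, so there are at least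
`C(r, t) / C(r, N)` such `U`.
-/

open Finset

theorem Nat.choose_sub_sub_le_choose {r t u N : ℕ} (htr : t ≤ r) (hut : u ≤ t) (hNt : N ≤ t)
    (htu : t ≤ u + N) : (r - u).choose (t - u) ≤ r.choose N :=
  calc (r - u).choose (t - u) = (r - u).choose (r - t) := by
        rw [← Nat.choose_symm (by omega)]; congr 1; omega
    _ ≤ (r - t + N).choose (r - t) := Nat.choose_le_choose _ (by omega)
    _ = (r - t + N).choose N := by rw [← Nat.choose_symm (by omega)]; congr 1; omega
    _ ≤ r.choose N := Nat.choose_le_choose _ (by omega)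

namespace Finset

variable {α : Type*}

theorem card_supersets_in_powersetCard_le_choose {S U : Finset α} {t N : ℕ} (hNt : N ≤ t)
    (htU : t ≤ #U + N) : #{T ∈ S.powersetCard t | U ⊆ T} ≤ (#S).choose N := by
  rcases eq_empty_or_nonempty {T ∈ S.powersetCard t | U ⊆ T} with hempty | ⟨T₀, hT₀⟩
  · simp [hempty]
  obtain ⟨⟨hT₀S, hT₀t⟩, hUT₀⟩ := by simpa only [mem_filter, mem_powersetCard] using hT₀
  have hUS : U ⊆ S := hUT₀.trans hT₀S
  have hsub : {T ∈ S.powersetCard t | U ⊆ T} ⊆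
      ((S \ U).powersetCard (t - #U)).image (· ∪ U) := by
    intro T hT
    obtain ⟨⟨hTS, hTt⟩, hUT⟩ := by simpa only [mem_filter, mem_powersetCard] using hT
    refine mem_image.mpr ⟨T \ U, mem_powersetCard.mpr ⟨sdiff_subset_sdiff hTS le_rfl, ?_⟩,
      sdiff_union_of_subset hUT⟩
    rw [card_sdiff_of_subset hUT, hTt]
  calc #{T ∈ S.powersetCard t | U ⊆ T}
      ≤ #((S \ U).powersetCard (t - #U)) := (card_le_card hsub).trans card_image_le
    _ = (#S - #U).choose (t - #U) := by rw [card_powersetCard, card_sdiff_of_subset hUS]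
    _ ≤ (#S).choose N :=
      Nat.choose_sub_sub_le_choose (hT₀t ▸ card_le_card hT₀S) (hT₀t ▸ card_le_card hUT₀) hNt htU

theorem choose_card_le_card_mul_choose_of_forall_exists_subset {S : Finset α}
    {t N : ℕ} (hNt : N ≤ t) (𝒬 : Finset (Finset α)) (h𝒬 : ∀ U ∈ 𝒬, t ≤ #U + N)
    (hcover : ∀ T ∈ S.powersetCard t, ∃ U ∈ 𝒬, U ⊆ T) :
    (#S).choose t ≤ #𝒬 * (#S).choose N := by
  have hsub : S.powersetCard t ⊆ 𝒬.biUnion fun U => {T ∈ S.powersetCard t | U ⊆ T} := by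
    intro T hT
    obtain ⟨U, hU, hUT⟩ := hcover T hT
    exact mem_biUnion.mpr ⟨U, hU, mem_filter.mpr ⟨hT, hUT⟩⟩
  calc (#S).choose t = #(S.powersetCard t) := (card_powersetCard t S).symm
    _ ≤ #𝒬 * (#S).choose N := (card_le_card hsub).trans <| card_biUnion_le_card_mul _ _ _
        fun U hU => card_supersets_in_powersetCard_le_choose hNt (h𝒬 U hU)

variable [CommMonoid α] {N : ℕ}

theorem exists_nonempty_subset_prod_eq_one
    (hprop : ∀ M : Multiset α, Multiset.card M = N → ∃ M' ≤ M, M' ≠ 0 ∧ M'.prod = 1)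
    (W : Finset α) (hW : #W = N) : ∃ V ⊆ W, V.Nonempty ∧ ∏ x ∈ V, x = 1 := by
  obtain ⟨M', hM'W, hM'ne, hM'prod⟩ := hprop W.val (by simpa using hW)
  refine ⟨⟨M', Multiset.nodup_of_le hM'W W.nodup⟩, val_le_iff.mp hM'W, ?_, ?_⟩
  · rwa [nonempty_iff_ne_empty, Ne, ← val_eq_zero]
  · rwa [prod_eq_multiset_prod, Multiset.map_id']

theorem exists_subset_prod_eq_one_card_le_add
    (hprop : ∀ W : Finset α, #W = N → ∃ V ⊆ W, V.Nonempty ∧ ∏ x ∈ V, x = 1) (T : Finset α) :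
    ∃ U ⊆ T, ∏ x ∈ U, x = 1 ∧ #T ≤ #U + N := by
  induction T using strongInduction with
  | _ T ih =>
    by_cases hT : #T < N
    · exact ⟨∅, empty_subset _, prod_empty, by omega⟩
    obtain ⟨W, hWT, hW⟩ := exists_subset_card_eq (s := T) (n := N) (by omega)
    obtain ⟨V, hVW, hVne, hVprod⟩ := hprop W hW
    have hVT : V ⊆ T := hVW.trans hWT
    obtain ⟨U, hUT, hUprod, hUcard⟩ := ih (T \ V) (sdiff_ssubset hVT hVne)
    have hUV : Disjoint U V := disjoint_of_subset_left hUT sdiff_disjoint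
    refine ⟨U ∪ V, union_subset (hUT.trans sdiff_subset) hVT, ?_, ?_⟩
    · rw [prod_union hUV, hUprod, hVprod, one_mul]
    · have hVcard : #V ≤ #W := card_le_card hVW
      rw [card_union_of_disjoint hUV]
      rw [card_sdiff_of_subset hVT] at hUcard
      omega

end Finset

theorem many_subsets_with_product_one_general (L : ℕ) (N : ℕ)
    (hprop : ∀ M : Multiset (ZMod L)ˣ, Multiset.card M = N →
      ∃ M' ≤ M, M' ≠ 0 ∧ M'.prod = 1)
    (r t : ℕ) (hNt : N < t)
    (S : Finset (ZMod L)ˣ) (hS : S.card = r) :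
    ((r.choose t : ℝ) / (r.choose N : ℝ)) ≤
      ((S.powerset.filter
          (fun T => T.card ≤ t ∧ t - N ≤ T.card ∧ (∏ x ∈ T, x) = 1)).card : ℝ) := by
  set Q := S.powerset.filter (fun T => T.card ≤ t ∧ t - N ≤ T.card ∧ (∏ x ∈ T, x) = 1)
  have hcover : ∀ T ∈ S.powersetCard t, ∃ U ∈ Q, U ⊆ T := by
    intro T hT
    obtain ⟨hTS, hTt⟩ := mem_powersetCard.mp hT
    obtain ⟨U, hUT, hUprod, hUcard⟩ := exists_subset_prod_eq_one_card_le_add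
      (exists_nonempty_subset_prod_eq_one hprop) T
    exact ⟨U, mem_filter.mpr ⟨mem_powerset.mpr (hUT.trans hTS),
      hTt ▸ card_le_card hUT, by omega, hUprod⟩, hUT⟩
  have hcount := choose_card_le_card_mul_choose_of_forall_exists_subset hNt.le Q
    (fun U hU => by have := (mem_filter.mp hU).2.2.1; omega) hcover
  rw [hS] at hcount
  exact div_le_of_le_mul₀ (Nat.cast_nonneg _) (Nat.cast_nonneg _) (by exact_mod_cast hcount)

/-- If every multiset of `N` elements of `(ℤ/Lℤ)ˣ` has a nonempty sub-multiset with
product `1`, and `r > t > N`, then any set `S` of `r` distinct elements of `(ℤ/Lℤ)ˣ`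
has at least `(r choose t) / (r choose N)` subsets of cardinality at most `t` and at
least `t - N` whose product is `1`. -/
theorem many_subsets_with_product_one (L : ℕ) (hL : 2 ≤ L) (N : ℕ) (hN : 0 < N)
    (hprop : ∀ M : Multiset (ZMod L)ˣ, Multiset.card M = N →
      ∃ M' ≤ M, M' ≠ 0 ∧ M'.prod = 1)
    (r t : ℕ) (htr : t < r) (hNt : N < t)
    (S : Finset (ZMod L)ˣ) (hS : S.card = r) :
    ((r.choose t : ℝ) / (r.choose N : ℝ)) ≤
      ((S.powerset.filter
          (fun T => T.card ≤ t ∧ t - N ≤ T.card ∧ (∏ x ∈ T, x) = 1)).card : ℝ) :=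
  many_subsets_with_product_one_general L N hprop r t hNt S hS
end

section
/- There exists a real number Y such that for every real y ≥ Y, every real θ with 1 < θ < 2, and every squarefree natural number L ≥ 2 with the property that every prime q dividing L satisfies q ≤ y^θ and every prime r dividing q − 1 satisfies r ≤ y, the exponent of the group (ℤ/Lℤ)ˣ is at most exp(2θy). -/
/-!
The exponent of `(ℤ/Lℤ)ˣ` is the Carmichael function `λ(L)`, which for squarefree `L` divides
`N = lcm_{q ∣ L} (q - 1)`. A prime power `r ^ e` exactly dividing `N` divides some `q - 1`, so
`r ≤ y` and `r ^ e ≤ y ^ θ`. Splitting `e log r ≤ log r + [e ≥ 2] log r + [e ≥ 3] e log r`,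
the first two sums run over primes up to `y` and `y ^ (θ/2)`, so Chebyshev's bound
`ϑ(x) ≤ x log 4` applies; the last has at most `y ^ (θ/3)` terms, each at most `2 log y`. Hence
`log N ≤ log 4 · (y + y ^ (θ/2)) + o(y)`, which is below `2θy`: for `θ ≥ 3/2` because
`2 log 4 < 3`, and for `θ < 3/2` because then `y ^ (θ/2) ≤ y ^ (3/4) = o(y)`.
-/

open Real Finset Filter Asymptotics

namespace ArithmeticFunction

theorem carmichael_dvd_lcm_primeFactors_sub_one {L : ℕ} (hL : Squarefree L) :
    carmichael L ∣ L.primeFactors.lcm (· - 1) := by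
  have : NeZero L := ⟨hL.ne_zero⟩
  rw [carmichael_factorization]
  refine lcm_mono_fun fun p hp => ?_
  have hp' := Nat.prime_of_mem_primeFactors hp
  rw [Nat.factorization_eq_one_of_squarefree hL hp' (Nat.dvd_of_mem_primeFactors hp), pow_one,
    ← Nat.totient_prime hp']
  exact carmichael_dvd_totient p

end ArithmeticFunction

theorem Finset.exists_ordProj_lcm_dvd {ι : Type*} {s : Finset ι} {f : ι → ℕ} (hs : s.Nonempty)
    (hf : ∀ i ∈ s, f i ≠ 0) (p : ℕ) : ∃ i ∈ s, p ^ (s.lcm f).factorization p ∣ f i := by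
  obtain ⟨i, hi, hmax⟩ := s.exists_mem_eq_sup hs fun i => (f i).factorization p
  refine ⟨i, hi, ?_⟩
  rw [Finset.factorization_lcm hf, hmax]
  exact Nat.ordProj_dvd _ _

namespace Nat

theorem sub_one_ne_zero_of_mem_primeFactors {L q : ℕ} (hq : q ∈ L.primeFactors) : q - 1 ≠ 0 :=
  Nat.sub_ne_zero_of_lt (prime_of_mem_primeFactors hq).one_lt

theorem lcm_primeFactors_sub_one_ne_zero (L : ℕ) : L.primeFactors.lcm (· - 1) ≠ 0 :=
  lcm_ne_zero_iff.2 fun _ => sub_one_ne_zero_of_mem_primeFactors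

theorem bounds_of_mem_primeFactors_lcm_sub_one {L : ℕ} {y z : ℝ}
    (hL : ∀ q : ℕ, q.Prime → q ∣ L → (q : ℝ) ≤ z ∧ ∀ r : ℕ, r.Prime → r ∣ q - 1 → (r : ℝ) ≤ y) :
    ∀ r ∈ (L.primeFactors.lcm (· - 1)).primeFactors,
      (r : ℝ) ≤ y ∧ (r : ℝ) ^ (L.primeFactors.lcm (· - 1)).factorization r ≤ z := by
  intro r hr
  have hs : L.primeFactors.Nonempty := nonempty_iff_ne_empty.2 fun h => by simp [h] at hr
  obtain ⟨q, hqL, hdvd⟩ :=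
    exists_ordProj_lcm_dvd hs (fun _ => sub_one_ne_zero_of_mem_primeFactors) r
  obtain ⟨hqz, hqy⟩ := hL q (prime_of_mem_primeFactors hqL) (dvd_of_mem_primeFactors hqL)
  have hpos : (L.primeFactors.lcm (· - 1)).factorization r ≠ 0 :=
    Finsupp.mem_support_iff.1 (support_factorization _ ▸ hr)
  refine ⟨hqy r (prime_of_mem_primeFactors hr) ((dvd_pow_self r hpos).trans hdvd), ?_⟩
  calc (r : ℝ) ^ (L.primeFactors.lcm (· - 1)).factorization r
      ≤ (q - 1 : ℕ) :=
        mod_cast le_of_dvd (pos_of_ne_zero (sub_one_ne_zero_of_mem_primeFactors hqL)) hdvd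
    _ ≤ q := mod_cast q.sub_le 1
    _ ≤ z := hqz

end Nat

theorem Real.le_rpow_div_of_pow_le {a y θ : ℝ} {n : ℕ} (ha : 0 ≤ a) (hy : 0 ≤ y) (hn : n ≠ 0)
    (h : a ^ n ≤ y ^ θ) : a ≤ y ^ (θ / n) := by
  rw [div_eq_mul_inv, rpow_mul hy, le_rpow_inv_iff_of_pos ha (by positivity) (by positivity),
    rpow_natCast]
  exact h

theorem Chebyshev.sum_log_le_theta {s : Finset ℕ} {x : ℝ} (hs : ∀ p ∈ s, p.Prime ∧ (p : ℝ) ≤ x) :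
    ∑ p ∈ s, log p ≤ Chebyshev.theta x := by
  refine sum_le_sum_of_subset_of_nonneg (fun p hp => ?_) fun p _ _ => log_natCast_nonneg p
  obtain ⟨hp, hpx⟩ := hs p hp
  simp only [mem_filter, mem_Ioc]
  exact ⟨⟨hp.pos, Nat.le_floor hpx⟩, hp⟩

theorem Finset.natCast_card_le_of_forall_le {s : Finset ℕ} {x : ℝ} (hx : 0 ≤ x)
    (hs : ∀ n ∈ s, 1 ≤ n ∧ (n : ℝ) ≤ x) : (#s : ℝ) ≤ x := by
  have : s ⊆ Icc 1 ⌊x⌋₊ := fun n hn => mem_Icc.2 ⟨(hs n hn).1, Nat.le_floor (hs n hn).2⟩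
  calc (#s : ℝ) ≤ ⌊x⌋₊ := by simpa using card_le_card this
    _ ≤ x := Nat.floor_le hx

theorem natCast_mul_le_add_ite {e : ℕ} {a : ℝ} (ha : 0 ≤ a) :
    e * a ≤ a + (if 2 ≤ e then a else 0) + (if 3 ≤ e then e * a else 0) := by
  by_cases h3 : 3 ≤ e
  · simp only [h3, show 2 ≤ e by omega, if_true]
    linarith
  · obtain rfl | rfl | rfl : e = 0 ∨ e = 1 ∨ e = 2 := by omega
    · simpa using ha
    · simp
    · norm_num
      linarith

theorem pow_le_of_le_factorization {N r k : ℕ} {z : ℝ} (hr : r ∈ N.primeFactors)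
    (hk : k ≤ N.factorization r) (hz : (r : ℝ) ^ N.factorization r ≤ z) : (r : ℝ) ^ k ≤ z :=
  (pow_le_pow_right₀ (mod_cast (Nat.prime_of_mem_primeFactors hr).one_le) hk).trans hz

theorem sum_factorization_mul_log_filter_le (N : ℕ) {y θ : ℝ} (hy : 1 ≤ y) (hθ : θ ≤ 2)
    (hN : ∀ r ∈ N.primeFactors, (r : ℝ) ^ N.factorization r ≤ y ^ θ) :
    ∑ r ∈ N.primeFactors with 3 ≤ N.factorization r, N.factorization r * log r ≤
      y ^ (3 / 4 : ℝ) * (2 * log y) := by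
  have hterm : ∀ r ∈ {r ∈ N.primeFactors | 3 ≤ N.factorization r},
      N.factorization r * log r ≤ 2 * log y := by
    intro r hr
    rw [mem_filter] at hr
    have hr0 : (0 : ℝ) < r := mod_cast (Nat.prime_of_mem_primeFactors hr.1).pos
    calc N.factorization r * log r = log ((r : ℝ) ^ N.factorization r) := (log_pow _ _).symm
      _ ≤ log (y ^ θ) := log_le_log (by positivity) (hN r hr.1)
      _ = θ * log y := log_rpow (by linarith) _
      _ ≤ 2 * log y := by gcongr; exact log_nonneg hy
  have hcard : (#{r ∈ N.primeFactors | 3 ≤ N.factorization r} : ℝ) ≤ y ^ (3 / 4 : ℝ) := by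
    refine natCast_card_le_of_forall_le (by positivity) fun r hr => ?_
    rw [mem_filter] at hr
    refine ⟨(Nat.prime_of_mem_primeFactors hr.1).one_le, ?_⟩
    calc (r : ℝ) ≤ y ^ (θ / 3) := mod_cast le_rpow_div_of_pow_le (by positivity)
          (by positivity) three_ne_zero (pow_le_of_le_factorization hr.1 hr.2 (hN r hr.1))
      _ ≤ y ^ (3 / 4 : ℝ) := rpow_le_rpow_of_exponent_le hy (by linarith)
  calc _ ≤ #{r ∈ N.primeFactors | 3 ≤ N.factorization r} • (2 * log y) :=
        sum_le_card_nsmul _ _ _ hterm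
    _ ≤ _ := by
      rw [nsmul_eq_mul]
      gcongr
      exact mul_nonneg zero_le_two (log_nonneg hy)

theorem log_le_of_forall_mem_primeFactors (N : ℕ) {y θ : ℝ} (hy : 1 ≤ y) (hθ : θ ≤ 2)
    (hN : ∀ r ∈ N.primeFactors, (r : ℝ) ≤ y ∧ (r : ℝ) ^ N.factorization r ≤ y ^ θ) :
    log N ≤ log 4 * y + log 4 * y ^ (θ / 2) + y ^ (3 / 4 : ℝ) * (2 * log y) := by
  set e := N.factorization
  have hprimes : ∑ r ∈ N.primeFactors, log r ≤ log 4 * y :=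
    (Chebyshev.sum_log_le_theta fun r hr => ⟨Nat.prime_of_mem_primeFactors hr, (hN r hr).1⟩).trans
      (Chebyshev.theta_le_log4_mul_x (by linarith))
  have hsquares : ∑ r ∈ N.primeFactors with 2 ≤ e r, log r ≤ log 4 * y ^ (θ / 2) := by
    refine (Chebyshev.sum_log_le_theta fun r hr => ?_).trans
      (Chebyshev.theta_le_log4_mul_x (by positivity))
    rw [mem_filter] at hr
    refine ⟨Nat.prime_of_mem_primeFactors hr.1, ?_⟩
    exact_mod_cast le_rpow_div_of_pow_le (by positivity) (by positivity) two_ne_zero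
      (pow_le_of_le_factorization hr.1 hr.2 (hN r hr.1).2)
  have hcubes := sum_factorization_mul_log_filter_le N hy hθ fun r hr => (hN r hr).2
  calc log N = ∑ r ∈ N.primeFactors, e r * log r := by
        rw [log_nat_eq_sum_factorization, Finsupp.sum, Nat.support_factorization]
    _ ≤ ∑ r ∈ N.primeFactors, (log r + (if 2 ≤ e r then log r else 0) +
          (if 3 ≤ e r then e r * log r else 0)) :=
        sum_le_sum fun r _ => natCast_mul_le_add_ite (log_natCast_nonneg r)
    _ = ∑ r ∈ N.primeFactors, log r + ∑ r ∈ N.primeFactors with 2 ≤ e r, log r +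
          ∑ r ∈ N.primeFactors with 3 ≤ e r, e r * log r := by
        rw [sum_add_distrib, sum_add_distrib, sum_filter, sum_filter]
    _ ≤ _ := by gcongr

theorem isLittleO_rpow_mul_log :
    (fun y : ℝ => y ^ (3 / 4 : ℝ) * (log 4 + 2 * log y)) =o[atTop] id := by
  have hlog : (fun y => log 4 + 2 * log y) =o[atTop] fun y : ℝ => y ^ (1 / 4 : ℝ) :=
    (isLittleO_const_left.2 <| .inr <| tendsto_abs_atTop_atTop.comp <|
      tendsto_rpow_atTop (by norm_num)).add
      ((isLittleO_log_rpow_atTop (by norm_num)).const_mul_left 2)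
  refine ((isBigO_refl _ _).mul_isLittleO hlog).congr' .rfl ?_
  filter_upwards [eventually_gt_atTop 0] with y hy
  rw [← rpow_add hy]
  norm_num

theorem eventually_rpow_mul_log_le :
    ∀ᶠ y : ℝ in atTop, 1 ≤ y ∧ y ^ (3 / 4 : ℝ) * (log 4 + 2 * log y) ≤ y / 5 := by
  filter_upwards [eventually_ge_atTop 1, isLittleO_rpow_mul_log.bound (c := 1 / 5) (by norm_num)]
    with y hy hsmall
  refine ⟨hy, (le_abs_self _).trans ?_⟩
  rw [← Real.norm_eq_abs]
  simpa [abs_of_nonneg (zero_le_one.trans hy), div_eq_inv_mul] using hsmall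

theorem log_four_mul_add_le {y θ : ℝ} (hy : 1 ≤ y) (hθ1 : 1 < θ) (hθ2 : θ < 2)
    (hsmall : y ^ (3 / 4 : ℝ) * (log 4 + 2 * log y) ≤ y / 5) :
    log 4 * y + log 4 * y ^ (θ / 2) + y ^ (3 / 4 : ℝ) * (2 * log y) ≤ 2 * θ * y := by
  have hlog4 : log 4 < 1.39 := by
    rw [show (4 : ℝ) = 2 ^ 2 by norm_num, log_pow]
    linarith [log_two_lt_d9]
  have hlog4_nonneg : 0 ≤ log 4 := log_nonneg (by norm_num)
  have hlower_nonneg : 0 ≤ y ^ (3 / 4 : ℝ) * log 4 := by positivity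
  rcases le_total θ (3 / 2) with hθ | hθ
  · have : y ^ (θ / 2) ≤ y ^ (3 / 4 : ℝ) := rpow_le_rpow_of_exponent_le hy (by linarith)
    nlinarith
  · have : y ^ (θ / 2) ≤ y := by
      simpa using rpow_le_rpow_of_exponent_le hy (show θ / 2 ≤ 1 by linarith)
    nlinarith

/-- For sufficiently large `y`: if `L` is squarefree, every prime `q ∣ L` satisfies
`q ≤ y ^ θ`, and every prime factor of `q - 1` is at most `y`, then the exponent of
`(ℤ/Lℤ)ˣ` is at most `exp (2 θ y)`. -/
theorem exponent_bound :
    ∃ Y : ℝ, ∀ y : ℝ, Y ≤ y → ∀ θ : ℝ, 1 < θ → θ < 2 →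
      ∀ L : ℕ, 2 ≤ L → Squarefree L →
        (∀ q : ℕ, q.Prime → q ∣ L →
          (q : ℝ) ≤ y ^ θ ∧ ∀ r : ℕ, r.Prime → r ∣ q - 1 → (r : ℝ) ≤ y) →
        (Monoid.exponent (ZMod L)ˣ : ℝ) ≤ Real.exp (2 * θ * y) := by
  obtain ⟨Y, hY⟩ := eventually_atTop.1 eventually_rpow_mul_log_le
  refine ⟨Y, fun y hy θ hθ1 hθ2 L _ hsf hq => ?_⟩
  obtain ⟨hy1, hsmall⟩ := hY y hy
  set N := L.primeFactors.lcm (· - 1)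
  have hN : 0 < N := Nat.pos_of_ne_zero (Nat.lcm_primeFactors_sub_one_ne_zero L)
  calc (Monoid.exponent (ZMod L)ˣ : ℝ) = ArithmeticFunction.carmichael L := by
        rw [ArithmeticFunction.carmichael_eq_exponent hsf.ne_zero]
    _ ≤ N := mod_cast Nat.le_of_dvd hN
        (ArithmeticFunction.carmichael_dvd_lcm_primeFactors_sub_one hsf)
    _ = exp (log N) := (exp_log (by positivity)).symm
    _ ≤ exp (2 * θ * y) := exp_le_exp.2 <|
        (log_le_of_forall_mem_primeFactors N hy1 hθ2.le
          (Nat.bounds_of_mem_primeFactors_lcm_sub_one hq)).trans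
        (log_four_mul_add_le hy1 hθ1 hθ2 hsmall)
end

section
/- There exists a real number Y such that for every real y ≥ Y, every real θ with 1 < θ < 2, and every squarefree natural number L ≥ 2 with the property that every prime q dividing L satisfies q ≤ y^θ and every prime r dividing q − 1 satisfies r ≤ y, the following holds: every multiset of elements of (ℤ/Lℤ)ˣ of cardinality at least exp(3θy) contains a nonempty sub-multiset whose product of elements equals 1. -/
/-!
For squarefree `L`, every unit mod `L` is killed by `E = lcm_{q ∣ L} (q - 1)`. If a coprime
product `a * b` kills a finite abelian group `G`, then `x ↦ x ^ a` has kernel killed by `a` and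
image killed by `b`, and `D(G) ≤ D(ker) * D(image)` for the Davenport constant `D`; so `D(G)` is
at most the product over `p ∣ E` of Olson's bound `1 + v_p(|G|) (p ^ v_p(E) - 1)` for `p`-groups.
Olson's bound holds because in `𝔽_p[G]` every `g - 1` lies in the ideal spanned by the `b_i - 1`
for a basis `(b_i)` of `G`, whose `(1 + ∑ (ord b_i - 1))`-th power vanishes, whereas the
coefficient of `1` in `∏_{g ∈ T} (g - 1)` is `±1` if `T` has no nonempty product-one
sub-multiset.

For `G = (ℤ/Lℤ)ˣ` each factor is at most `3 N²` with `N = ⌊y ^ θ⌋` (as `|G| ≤ L ≤ 4 ^ N` and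
`p ^ v_p(E) ≤ q - 1`), there are at most `π(y)` factors, and Chebyshev's bound
`π(y) ≤ (log 4 + ε) y / log y` gives `(3 N²) ^ π(y) ≤ exp (3 θ y)`.
-/

open Multiset MonoidAlgebra

/-- The Davenport constant of `G` is at most `n`. -/
def IsDavenportBound (G : Type*) [CommMonoid G] (n : ℕ) : Prop :=
  ∀ M : Multiset G, n ≤ card M → ∃ M' ≤ M, M' ≠ 0 ∧ M'.prod = 1

theorem Multiset.exists_le_map_eq {α β : Type*} {f : α → β} {s : Multiset α}
    {t : Multiset β} (h : t ≤ s.map f) : ∃ u ≤ s, u.map f = t := by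
  induction s using Quotient.inductionOn
  induction t using Quotient.inductionOn
  obtain ⟨l, hl, hsub⟩ := h
  obtain ⟨l', hl', rfl⟩ := List.sublist_map_iff.mp hsub
  exact ⟨l', hl'.subperm, Quot.sound hl⟩

theorem Multiset.exists_le_card_eq {α : Type*} {s : Multiset α} {n : ℕ} (h : n ≤ card s) :
    ∃ t ≤ s, card t = n := by
  obtain ⟨t, ht⟩ := card_pos_iff_exists_mem.mp
    (by rw [card_powersetCard]; exact Nat.choose_pos h : 0 < card (powersetCard n s))
  exact ⟨t, mem_powersetCard.mp ht⟩

theorem Multiset.join_le_join {α : Type*} {s t : Multiset (Multiset α)} (h : s ≤ t) :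
    s.join ≤ t.join := by
  obtain ⟨u, rfl⟩ := Multiset.le_iff_exists_add.mp h
  rw [join_add]
  exact le_add_right _ _

namespace IsDavenportBound

variable {G K : Type*}

theorem mono [CommMonoid G] {m n : ℕ} (h : IsDavenportBound G m) (hmn : m ≤ n) :
    IsDavenportBound G n :=
  fun M hM => h M (hmn.trans hM)

theorem of_subsingleton [CommMonoid G] [Subsingleton G] : IsDavenportBound G 1 :=
  fun M hM => ⟨M, le_rfl, card_pos.mp hM, Subsingleton.elim _ _⟩

theorem exists_blocks [CommMonoid G] [CommMonoid K] (f : G →* K) {b : ℕ}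
    (hK : IsDavenportBound K b) (j : ℕ) (M : Multiset G) (hM : j * b ≤ card M) :
    ∃ Bs : Multiset (Multiset G), card Bs = j ∧ Bs.join ≤ M ∧
      ∀ B ∈ Bs, B ≠ 0 ∧ f B.prod = 1 := by
  classical
  induction j generalizing M with
  | zero => exact ⟨0, rfl, by simp, by simp⟩
  | succ j ih =>
    obtain ⟨N, hNM, hN⟩ := exists_le_card_eq (le_of_add_le_right (Nat.succ_mul j b ▸ hM))
    obtain ⟨N', hN'N, hN'0, hN'prod⟩ := hK (N.map f) (by rw [card_map, hN])
    obtain ⟨B, hBN, rfl⟩ := exists_le_map_eq hN'N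
    have hBM : B ≤ M := hBN.trans hNM
    obtain ⟨Bs, hcard, hle, hBs⟩ := ih (M - B) <| by
      have := card_le_card hBN
      rw [card_sub hBM]
      rw [Nat.succ_mul] at hM
      omega
    refine ⟨B ::ₘ Bs, by rw [card_cons, hcard], ?_, ?_⟩
    · rw [join_cons]
      calc B + Bs.join ≤ B + (M - B) := add_le_add_right hle B
        _ = M := add_tsub_cancel_of_le hBM
    · rintro B' hB'
      rcases mem_cons.mp hB' with rfl | hB'
      · exact ⟨fun h => hN'0 (by rw [h, Multiset.map_zero]), by rwa [map_multiset_prod]⟩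
      · exact hBs B' hB'

theorem of_ker [CommGroup G] [CommGroup K] (f : G →* K) {a b : ℕ}
    (hker : IsDavenportBound f.ker a) (hK : IsDavenportBound K b) :
    IsDavenportBound G (a * b) := by
  intro M hM
  obtain ⟨Bs, hcard, hle, hBs⟩ := exists_blocks f hK a M hM
  let blockProd : {B // B ∈ Bs} → f.ker := fun B => ⟨B.1.prod, (hBs B.1 B.2).2⟩
  obtain ⟨Z, hZle, hZ0, hZprod⟩ := hker (Bs.attach.map blockProd) (by simp [hcard])
  obtain ⟨C, hCle, rfl⟩ := exists_le_map_eq hZle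
  have hCBs : (C.map Subtype.val).join ≤ Bs.join :=
    join_le_join (by simpa using map_le_map (f := Subtype.val) hCle)
  refine ⟨(C.map Subtype.val).join, hCBs.trans hle, ?_, ?_⟩
  · obtain ⟨B, hB⟩ := exists_mem_of_ne_zero fun h : C = 0 => hZ0 (by rw [h, Multiset.map_zero])
    intro h
    exact (hBs B.1 B.2).1 (le_zero.mp (h ▸ le_sum_of_mem (mem_map_of_mem _ hB)))
  · simpa [prod_join, map_map, Subgroup.val_multiset_prod, blockProd] using
      congrArg Subtype.val hZprod

end IsDavenportBound

section GroupAlgebra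

variable {k G : Type*} [CommRing k] [CommGroup G]

theorem MonoidAlgebra.coeff_of_sub_one_mul (g : G) (Q : MonoidAlgebra k G) (x : G) :
    ((of k G g - 1) * Q).coeff x = Q.coeff (g⁻¹ * x) - Q.coeff x := by
  rw [sub_mul, one_mul, coeff_sub, Finsupp.sub_apply, of_apply, coeff_single_mul_apply, one_mul]

theorem Multiset.exists_le_prod_eq_of_coeff_prod_of_sub_one_ne_zero (T : Multiset G) {x : G}
    (hx : ((T.map fun g => of k G g - 1).prod).coeff x ≠ 0) : ∃ T' ≤ T, T'.prod = x := by
  induction T using Multiset.induction generalizing x with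
  | empty =>
    rw [Multiset.map_zero, prod_zero, one_def, coeff_single, Finsupp.single_apply_ne_zero] at hx
    exact ⟨0, le_rfl, hx.1.symm⟩
  | cons g T ih =>
    rw [map_cons, prod_cons, coeff_of_sub_one_mul] at hx
    by_cases h : ((T.map fun g => of k G g - 1).prod).coeff x = 0
    · obtain ⟨T', hT', hprod⟩ := ih (x := g⁻¹ * x) fun h' => hx (by rw [h', h, sub_zero])
      exact ⟨g ::ₘ T', cons_le_cons g hT', by rw [prod_cons, hprod, mul_inv_cancel_left]⟩
    · obtain ⟨T', hT', hprod⟩ := ih h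
      exact ⟨T', hT'.trans (le_cons_self T g), hprod⟩

theorem Multiset.coeff_one_prod_of_sub_one (T : Multiset G)
    (hT : ∀ T' ≤ T, T' ≠ 0 → T'.prod ≠ 1) :
    ((T.map fun g => of k G g - 1).prod).coeff 1 = (-1) ^ card T := by
  induction T using Multiset.induction with
  | empty => simp
  | cons g T ih =>
    have hg : ((T.map fun g => of k G g - 1).prod).coeff (g⁻¹ * 1) = 0 := by
      by_contra h
      obtain ⟨T', hT', hprod⟩ := exists_le_prod_eq_of_coeff_prod_of_sub_one_ne_zero T h
      exact hT (g ::ₘ T') (cons_le_cons g hT') cons_ne_zero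
        (by rw [prod_cons, hprod, mul_inv_cancel_left])
    rw [map_cons, prod_cons, coeff_of_sub_one_mul, hg,
      ih fun T' h => hT T' (h.trans (le_cons_self T g)), card_cons, pow_succ]
    ring

theorem Multiset.exists_prod_eq_one_of_prod_of_sub_one_eq_zero [Nontrivial k] (T : Multiset G)
    (h : (T.map fun g => of k G g - 1).prod = 0) : ∃ T' ≤ T, T' ≠ 0 ∧ T'.prod = 1 := by
  by_contra! hT
  have := coeff_one_prod_of_sub_one (k := k) T hT
  rw [h, coeff_zero] at this
  exact (isUnit_one.neg.pow _).ne_zero this.symm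

end GroupAlgebra

theorem Ideal.span_range_pow_eq_bot {A ι : Type*} [CommRing A] [Fintype ι] {x : ι → A}
    {n : ι → ℕ} (hx : ∀ i, x i ^ n i = 0) {m : ℕ} (hm : ∑ i, (n i - 1) < m) :
    Ideal.span (Set.range x) ^ m = ⊥ := by
  have hspan : Ideal.span (Set.range x) =
      (MvPolynomial.idealOfVars ι A).map (MvPolynomial.aeval x) := by
    rw [Ideal.map_span, ← Set.range_comp]
    congr
    ext i
    simp
  rw [hspan, ← Ideal.map_pow, MvPolynomial.pow_idealOfVars_eq_span, Ideal.map_span,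
    Ideal.span_eq_bot]
  -- by pigeonhole, a monomial of degree `m` has some exponent `d i ≥ n i`
  rintro _ ⟨_, ⟨d, hd, rfl⟩, rfl⟩
  obtain ⟨i, hni, hdi⟩ : ∃ i, n i ≤ d i ∧ d i ≠ 0 := by
    by_contra! h
    have : d.degree ≤ ∑ i, (n i - 1) := by
      rw [Finsupp.degree_eq_sum]
      exact Finset.sum_le_sum fun i _ => by have := h i; omega
    simp only [Set.mem_preimage, Set.mem_singleton_iff] at hd
    omega
  rw [MvPolynomial.aeval_monomial, map_one, one_mul, Finsupp.prod,
    Finset.prod_eq_zero (Finsupp.mem_support_iff.mpr hdi)]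
  rw [← Nat.add_sub_cancel' hni, pow_add, hx, zero_mul]

theorem Ideal.multiset_prod_mem_pow {R : Type*} [CommSemiring R] {I : Ideal R} {s : Multiset R}
    (h : ∀ x ∈ s, x ∈ I) : s.prod ∈ I ^ card s := by
  induction s using Multiset.induction with
  | empty => simp
  | cons a s ih =>
    rw [prod_cons, card_cons, pow_succ']
    exact Ideal.mul_mem_mul (h a (mem_cons_self a s)) (ih fun x hx => h x (mem_cons_of_mem hx))

theorem IsDavenportBound.of_forall_eq_prod_pow {G ι : Type*} [CommGroup G] [Fintype ι] (p : ℕ)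
    [Fact p.Prime] (b : ι → G) (e : ι → ℕ) (hb : ∀ i, b i ^ p ^ e i = 1)
    (hgen : ∀ g, ∃ c : ι → ℕ, ∏ i, b i ^ c i = g) :
    IsDavenportBound G (1 + ∑ i, (p ^ e i - 1)) := by
  have : CharP (MonoidAlgebra (ZMod p) G) p := charP_of_injective_algebraMap' (ZMod p) p
  set J := Ideal.span (Set.range fun i => of (ZMod p) G (b i) - 1)
  have hJ : ∀ g, of (ZMod p) G g - 1 ∈ J := by
    have hb1 : ∀ i, Ideal.Quotient.mk J (of (ZMod p) G (b i)) = 1 := fun i => by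
      rw [← map_one (Ideal.Quotient.mk J), Ideal.Quotient.eq]
      exact Ideal.subset_span ⟨i, rfl⟩
    intro g
    obtain ⟨c, rfl⟩ := hgen g
    rw [← Ideal.Quotient.eq, map_one, map_prod, map_prod]
    exact Finset.prod_eq_one fun i _ => by rw [map_pow, map_pow, hb1, one_pow]
  have hJpow : J ^ (1 + ∑ i, (p ^ e i - 1)) = ⊥ := by
    refine Ideal.span_range_pow_eq_bot (n := fun i => p ^ e i) (fun i => ?_) (by omega)
    rw [sub_pow_char_pow, ← map_pow, hb, map_one, one_pow, sub_self]
  intro T hT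
  apply T.exists_prod_eq_one_of_prod_of_sub_one_eq_zero (k := ZMod p)
  have hmem := Ideal.multiset_prod_mem_pow (s := T.map fun g => of (ZMod p) G g - 1)
    (I := J) (by simpa using fun g _ => hJ g)
  rw [card_map] at hmem
  rw [← Ideal.mem_bot, ← hJpow]
  exact Ideal.pow_le_pow_right hT hmem

theorem Pi.prod_mulSingle_ofAdd_one_pow_val {ι : Type*} [Fintype ι] [DecidableEq ι]
    {n : ι → ℕ} [∀ i, NeZero (n i)] (g : ∀ i, Multiplicative (ZMod (n i))) :
    ∏ i, Pi.mulSingle (M := fun i => Multiplicative (ZMod (n i))) i (.ofAdd 1) ^ (g i).toAdd.val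
      = g := by
  simp_rw [← Pi.mulSingle_pow, ← ofAdd_nsmul, nsmul_one, ZMod.natCast_zmod_val]
  exact Finset.univ_prod_mulSingle g

theorem IsDavenportBound.of_pow_prime_pow_eq_one {G : Type*} [CommGroup G] [Finite G] {p v : ℕ}
    (hp : p.Prime) (hexp : ∀ x : G, x ^ p ^ v = 1) :
    IsDavenportBound G (1 + (Nat.card G).factorization p * (p ^ v - 1)) := by
  have := Fact.mk hp
  classical
  obtain ⟨ι, _, n, hn, ⟨φ⟩⟩ := CommGroup.equiv_prod_multiplicative_zmod_of_finite G
  have : ∀ i, NeZero (n i) := fun i => ⟨by have := hn i; omega⟩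
  set b : ι → G := fun i =>
    φ.symm (Pi.mulSingle (M := fun i => Multiplicative (ZMod (n i))) i (.ofAdd 1))
  have horder : ∀ i, orderOf (b i) = n i := fun i => by
    rw [MulEquiv.orderOf_eq, orderOf_piMulSingle, orderOf_ofAdd_eq_addOrderOf, ZMod.addOrderOf_one]
  choose e he using fun i =>
    (Nat.dvd_prime_pow hp).mp (horder i ▸ orderOf_dvd_of_pow_eq_one (hexp (b i)))
  have hcard : Nat.card G = p ^ ∑ i, e i := by
    rw [Nat.card_congr φ.toEquiv, Nat.card_pi, ← Finset.prod_pow_eq_pow_sum]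
    exact Finset.prod_congr rfl fun i _ => by
      rw [Nat.card_eq_fintype_card, Fintype.card_multiplicative, ZMod.card, (he i).2]
  have hgen : ∀ g, ∃ c : ι → ℕ, ∏ i, b i ^ c i = g := fun g =>
    ⟨fun i => (φ g i).toAdd.val, φ.injective <| by
      simp only [b, map_prod, map_pow, MulEquiv.apply_symm_apply,
        Pi.prod_mulSingle_ofAdd_one_pow_val]⟩
  refine (of_forall_eq_prod_pow p b e
    (fun i => by rw [← (he i).2, ← horder i, pow_orderOf_eq_one]) hgen).mono ?_
  rw [hcard, hp.factorization_pow, Finsupp.single_eq_same, Finset.sum_mul]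
  gcongr with i
  have hei : 1 ≤ e i := Nat.one_le_iff_ne_zero.mpr fun h => by have := hn i; simp_all
  have : p ^ e i ≤ p ^ v := Nat.pow_le_pow_right hp.pos (he i).1
  nlinarith [Nat.sub_le_sub_right this 1]

/-- For a group of order `n` whose exponent divides `e`: the product over the primes `p ∣ e` of
Olson's bound for the Sylow `p`-subgroup. -/
def olsonBound (n e : ℕ) : ℕ :=
  e.factorization.prod fun p k => 1 + n.factorization p * (p ^ k - 1)

theorem olsonBound_one (n : ℕ) : olsonBound n 1 = 1 := by
  simp [olsonBound]

theorem olsonBound_prime_pow (n : ℕ) {p : ℕ} (hp : p.Prime) (k : ℕ) :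
    olsonBound n (p ^ k) = 1 + n.factorization p * (p ^ k - 1) := by
  rw [olsonBound, hp.factorization_pow, Finsupp.prod_single_index (by simp)]

theorem olsonBound_mul (n : ℕ) {a b : ℕ} (hab : a.Coprime b) :
    olsonBound n (a * b) = olsonBound n a * olsonBound n b := by
  rw [olsonBound, Nat.factorization_mul_of_coprime hab,
    Finsupp.prod_add_index_of_disjoint hab.disjoint_primeFactors]
  rfl

theorem olsonBound_mono_left {m n : ℕ} (e : ℕ) (hmn : m ∣ n) (hn : n ≠ 0) :
    olsonBound m e ≤ olsonBound n e := by
  have hm : m ≠ 0 := ne_zero_of_dvd_ne_zero hn hmn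
  unfold olsonBound Finsupp.prod
  refine Finset.prod_le_prod' fun p _ => Nat.add_le_add_left (Nat.mul_le_mul_right _ ?_) 1
  exact (Nat.factorization_le_iff_dvd hm hn).mpr hmn p

theorem olsonBound_card_subgroup_le {G : Type*} [Group G] [Finite G] (H : Subgroup G) (e : ℕ) :
    olsonBound (Nat.card H) e ≤ olsonBound (Nat.card G) e :=
  olsonBound_mono_left e (Subgroup.card_subgroup_dvd_card H) Nat.card_pos.ne'

theorem IsDavenportBound.of_pow_eq_one {G : Type*} [CommGroup G] [Finite G] {e : ℕ}
    (he : 0 < e) (hexp : ∀ x : G, x ^ e = 1) :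
    IsDavenportBound G (olsonBound (Nat.card G) e) := by
  induction e using Nat.recOnPosPrimePosCoprime generalizing G with
  | prime_pow p k hp _ =>
    rw [olsonBound_prime_pow _ hp]
    exact of_pow_prime_pow_eq_one hp hexp
  | zero => exact absurd he (lt_irrefl 0)
  | one =>
    have : Subsingleton G := ⟨fun x y => by rw [← pow_one x, ← pow_one y, hexp, hexp]⟩
    rw [olsonBound_one]
    exact of_subsingleton
  | coprime a b ha hb hab iha ihb =>
    set f := (powMonoidHom a : G →* G).rangeRestrict
    have hker : IsDavenportBound f.ker (olsonBound (Nat.card f.ker) a) :=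
      iha (by omega) fun x => Subtype.ext <| by
        simpa [f, MonoidHom.mem_ker] using x.2
    have hrange : IsDavenportBound (powMonoidHom a : G →* G).range
        (olsonBound (Nat.card (powMonoidHom a : G →* G).range) b) := by
      refine ihb (by omega) fun ⟨_, x, rfl⟩ => Subtype.ext ?_
      simp [← pow_mul, hexp]
    rw [olsonBound_mul _ hab]
    exact of_ker f (hker.mono (olsonBound_card_subgroup_le _ a))
      (hrange.mono (olsonBound_card_subgroup_le _ b))

theorem Nat.Prime.pow_dvd_or_pow_dvd_of_pow_dvd_lcm {p m a b : ℕ} (hp : p.Prime)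
    (h : p ^ m ∣ Nat.lcm a b) : p ^ m ∣ a ∨ p ^ m ∣ b := by
  rcases eq_or_ne a 0 with rfl | ha
  · exact .inl (dvd_zero _)
  rcases eq_or_ne b 0 with rfl | hb
  · exact .inr (dvd_zero _)
  rw [hp.pow_dvd_iff_le_factorization (Nat.lcm_ne_zero ha hb), Nat.factorization_lcm ha hb,
    Finsupp.sup_apply, le_sup_iff] at h
  exact h.imp (hp.pow_dvd_iff_le_factorization ha).mpr (hp.pow_dvd_iff_le_factorization hb).mpr

theorem Nat.Prime.exists_pow_dvd_of_pow_dvd_finset_lcm {ι : Type*} {s : Finset ι} {f : ι → ℕ}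
    {p m : ℕ} (hp : p.Prime) (hm : m ≠ 0) (h : p ^ m ∣ s.lcm f) :
    ∃ i ∈ s, p ^ m ∣ f i := by
  classical
  induction s using Finset.induction with
  | empty =>
    rw [Finset.lcm_empty, Nat.dvd_one, pow_eq_one_iff] at h
    exact absurd (h.resolve_right hm) hp.one_lt.ne'
  | insert a s ha ih =>
    rw [Finset.lcm_insert] at h
    rcases hp.pow_dvd_or_pow_dvd_of_pow_dvd_lcm h with h | h
    · exact ⟨a, Finset.mem_insert_self a s, h⟩
    · obtain ⟨i, hi, hdvd⟩ := ih h
      exact ⟨i, Finset.mem_insert_of_mem hi, hdvd⟩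

theorem ZMod.eq_zero_of_forall_castHom_eq_zero {L : ℕ} (hL : Squarefree L) {w : ZMod L}
    (h : ∀ q (hq : q ∈ L.primeFactors),
      ZMod.castHom (Nat.dvd_of_mem_primeFactors hq) (ZMod q) w = 0) : w = 0 := by
  have : NeZero L := ⟨hL.ne_zero⟩
  rw [← ZMod.natCast_zmod_val w, ZMod.natCast_eq_zero_iff]
  have hdvd : ∏ q ∈ L.primeFactors, q ∣ w.val :=
    Finset.prod_primes_dvd _ (fun q hq => (Nat.prime_of_mem_primeFactors hq).prime) fun q hq => by
      rw [← ZMod.natCast_eq_zero_iff,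
        ← map_natCast (ZMod.castHom (Nat.dvd_of_mem_primeFactors hq) (ZMod q)),
        ZMod.natCast_zmod_val]
      exact h q hq
  rwa [Nat.prod_primeFactors_of_squarefree hL] at hdvd

theorem ZMod.units_pow_lcm_primeFactors_sub_one {L : ℕ} (hL : Squarefree L) (u : (ZMod L)ˣ) :
    u ^ L.primeFactors.lcm (· - 1) = 1 := by
  ext
  rw [Units.val_pow_eq_pow_val, Units.val_one, ← sub_eq_zero]
  refine ZMod.eq_zero_of_forall_castHom_eq_zero hL fun q hq => ?_
  have := Fact.mk (Nat.prime_of_mem_primeFactors hq)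
  obtain ⟨c, hc⟩ := Finset.dvd_lcm (f := (· - 1)) hq
  have := congrArg Units.val <| ZMod.units_pow_card_sub_one_eq_one q
    (Units.map (ZMod.castHom (Nat.dvd_of_mem_primeFactors hq) (ZMod q)).toMonoidHom u)
  rw [map_sub, map_pow, map_one, hc, pow_mul, sub_eq_zero]
  simpa using congrArg (· ^ c) this

theorem Squarefree.le_four_pow {L N : ℕ} (hL : Squarefree L)
    (h : ∀ q ∈ L.primeFactors, q ≤ N) : L ≤ 4 ^ N :=
  calc L = ∏ q ∈ L.primeFactors, q := (Nat.prod_primeFactors_of_squarefree hL).symm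
    _ ≤ primorial N := Finset.prod_le_prod_of_subset_of_one_le'
        (fun q hq => Nat.mem_primesLE.mpr ⟨h q hq, Nat.prime_of_mem_primeFactors hq⟩)
        (fun _ hq _ => (Nat.prime_of_mem_primesLE hq).one_le)
    _ ≤ 4 ^ N := primorial_le_four_pow N

theorem Nat.lcm_primeFactors_sub_one_pos (L : ℕ) : 0 < L.primeFactors.lcm (· - 1) :=
  Nat.pos_of_ne_zero <| Finset.lcm_eq_zero_iff.not.mpr fun ⟨q, hq, h⟩ => by
    have := (Nat.prime_of_mem_primeFactors hq).two_le
    omega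

theorem olsonBound_le_pow {n e B : ℕ} {s : Finset ℕ} (hB : 1 ≤ B) (hs : e.primeFactors ⊆ s)
    (h : ∀ p ∈ e.primeFactors, 1 + n.factorization p * (p ^ e.factorization p - 1) ≤ B) :
    olsonBound n e ≤ B ^ s.card := by
  unfold olsonBound Finsupp.prod
  rw [Nat.support_factorization]
  exact (Finset.prod_le_pow_card _ _ _ h).trans
    (Nat.pow_le_pow_right hB (Finset.card_le_card hs))

theorem olsonBound_card_units_zmod_le {L N Y : ℕ} (hL : Squarefree L) (hN : 1 ≤ N)
    (h : ∀ q ∈ L.primeFactors, q ≤ N ∧ ∀ r, r.Prime → r ∣ q - 1 → r ≤ Y) :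
    olsonBound (Nat.card (ZMod L)ˣ) (L.primeFactors.lcm (· - 1)) ≤
      (3 * N ^ 2) ^ Nat.primeCounting Y := by
  have : NeZero L := ⟨hL.ne_zero⟩
  have hcard : Nat.card (ZMod L)ˣ ≤ 4 ^ N := by
    rw [Nat.card_eq_fintype_card, ZMod.card_units_eq_totient]
    exact (Nat.totient_le L).trans (hL.le_four_pow fun q hq => (h q hq).1)
  rw [← Nat.primesLE_card_eq_primeCounting]
  refine olsonBound_le_pow (by nlinarith) (fun p hp => ?_) (fun p hp => ?_)
  all_goals have hp' := Nat.prime_of_mem_primeFactors hp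
  · obtain ⟨q, hq, hdvd⟩ := hp'.exists_pow_dvd_of_pow_dvd_finset_lcm one_ne_zero
      (by simpa using Nat.dvd_of_mem_primeFactors hp)
    exact Nat.mem_primesLE.mpr ⟨(h q hq).2 p hp' (by simpa using hdvd), hp'⟩
  · obtain ⟨q, hq, hdvd⟩ := hp'.exists_pow_dvd_of_pow_dvd_finset_lcm
      (Nat.pos_iff_ne_zero.mp (hp'.factorization_pos_of_dvd
        (Nat.lcm_primeFactors_sub_one_pos L).ne' (Nat.dvd_of_mem_primeFactors hp)))
      (Nat.ordProj_dvd _ _)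
    have hq2 := (Nat.prime_of_mem_primeFactors hq).two_le
    have h1 : p ^ (L.primeFactors.lcm (· - 1)).factorization p ≤ N :=
      (Nat.le_of_dvd (by omega) hdvd).trans (by have := (h q hq).1; omega)
    have h2 : (Nat.card (ZMod L)ˣ).factorization p ≤ 2 * N := by
      refine Nat.factorization_le_of_le_pow (hcard.trans ?_)
      rw [show 4 = 2 ^ 2 from rfl, ← pow_mul]
      exact Nat.pow_le_pow_left hp'.two_le _
    nlinarith [Nat.sub_le (p ^ (L.primeFactors.lcm (· - 1)).factorization p) 1]

section Asymptotics

open Real Filter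

theorem eventually_primeCounting_mul_log_le : ∀ᶠ y : ℝ in atTop,
    (Nat.primeCounting ⌊y⌋₊ : ℝ) * (log 3 + 2 * log y) ≤ 3 * y := by
  filter_upwards [Chebyshev.eventually_primeCounting_le (ε := 1 / 100) (by norm_num),
    tendsto_log_atTop.eventually_ge_atTop 20, eventually_gt_atTop 0] with y hπ hlog hy
  have hlog4 : log 4 < 1.3863 := by
    rw [show (4 : ℝ) = 2 ^ 2 by norm_num, log_pow]
    linarith [log_two_lt_d9]
  have hlog3 : log 3 < log 4 := log_lt_log (by norm_num) (by norm_num)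
  have hlog3' : 0 < log 3 := log_pos (by norm_num)
  calc (Nat.primeCounting ⌊y⌋₊ : ℝ) * (log 3 + 2 * log y)
      ≤ (log 4 + 1 / 100) * y / log y * (log 3 + 2 * log y) := by gcongr
    _ ≤ 3 * y := by
      have hc : (log 4 + 1 / 100) * (log 3 + 2 * log y) ≤ 3 * log y := by
        nlinarith [mul_lt_mul_of_pos_right hlog4 (by linarith : (0:ℝ) < log 3 + 2 * log y)]
      rw [div_mul_eq_mul_div, div_le_iff₀ (by linarith)]
      nlinarith [mul_le_mul_of_nonneg_left hc hy.le]

theorem three_mul_sq_pow_primeCounting_le_exp {y θ : ℝ} {N : ℕ} (hy : 1 ≤ y) (hθ : 1 ≤ θ)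
    (hN : 1 ≤ N) (hNy : (N : ℝ) ≤ y ^ θ)
    (hπ : (Nat.primeCounting ⌊y⌋₊ : ℝ) * (log 3 + 2 * log y) ≤ 3 * y) :
    (((3 * N ^ 2) ^ Nat.primeCounting ⌊y⌋₊ : ℕ) : ℝ) ≤ exp (3 * θ * y) := by
  have hN0 : (0 : ℝ) < N := by exact_mod_cast hN
  have hlogN : log N ≤ θ * log y := by
    rw [← log_rpow (by linarith)]
    exact log_le_log hN0 hNy
  have hlog3 : 0 ≤ log 3 := log_nonneg (by norm_num)
  have hπ0 : (0 : ℝ) ≤ Nat.primeCounting ⌊y⌋₊ := Nat.cast_nonneg _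
  push_cast
  rw [← exp_log (by positivity : (0 : ℝ) < (3 * N ^ 2) ^ Nat.primeCounting ⌊y⌋₊),
    exp_le_exp, log_pow, log_mul (by norm_num) (by positivity), log_pow]
  push_cast
  nlinarith [mul_le_mul_of_nonneg_left hπ (by linarith : (0 : ℝ) ≤ θ),
    mul_nonneg (mul_nonneg hπ0 hlog3) (by linarith : (0 : ℝ) ≤ θ - 1),
    mul_le_mul_of_nonneg_left hlogN hπ0]

end Asymptotics

/-- For sufficiently large `y`: if `L` is squarefree, every prime `q ∣ L` satisfies
`q ≤ y ^ θ`, and every prime factor of `q - 1` is at most `y`, then every multiset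
of elements of `(ℤ/Lℤ)ˣ` of cardinality at least `exp (3 θ y)` contains a nonempty
sub-multiset whose product is `1`. -/
theorem davenport_bound_smooth :
    ∃ Y : ℝ, ∀ y : ℝ, Y ≤ y → ∀ θ : ℝ, 1 < θ → θ < 2 →
      ∀ L : ℕ, 2 ≤ L → Squarefree L →
        (∀ q : ℕ, q.Prime → q ∣ L →
          (q : ℝ) ≤ y ^ θ ∧ ∀ r : ℕ, r.Prime → r ∣ q - 1 → (r : ℝ) ≤ y) →
        ∀ M : Multiset (ZMod L)ˣ, Real.exp (3 * θ * y) ≤ (Multiset.card M : ℝ) →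
          ∃ M' ≤ M, M' ≠ 0 ∧ M'.prod = 1 := by
  obtain ⟨Y, hY⟩ := Filter.eventually_atTop.mp
    (eventually_primeCounting_mul_log_le.and (Filter.eventually_ge_atTop 1))
  refine ⟨Y, fun y hyY θ hθ _ L _ hL hLq M hM => ?_⟩
  obtain ⟨hπ, hy⟩ := hY y hyY
  have hN : 1 ≤ ⌊y ^ θ⌋₊ := Nat.le_floor (by simpa using Real.one_le_rpow hy (by linarith))
  have hbound := olsonBound_card_units_zmod_le hL hN (Y := ⌊y⌋₊) fun q hq => by
    obtain ⟨hqy, hr⟩ :=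
      hLq q (Nat.prime_of_mem_primeFactors hq) (Nat.dvd_of_mem_primeFactors hq)
    exact ⟨Nat.le_floor hqy, fun r hr' hrq => Nat.le_floor (hr r hr' hrq)⟩
  refine IsDavenportBound.of_pow_eq_one (Nat.lcm_primeFactors_sub_one_pos L)
    (ZMod.units_pow_lcm_primeFactors_sub_one hL) M ?_
  have := three_mul_sq_pow_primeCounting_le_exp hy hθ.le hN (Nat.floor_le (by positivity)) hπ
  exact_mod_cast ((Nat.cast_le.mpr hbound).trans this).trans hM
end

section
/- Let Q₁, …, Q_s be pairwise coprime natural numbers, each greater than some natural number B ≥ 1, let S₁ and S₂ be distinct subsets of {1, …, s}, and let k₁, k₂ be positive integers with k₁ ≤ B and k₂ ≤ B. Then (∏_{i ∈ S₁} Q_i) · k₁ ≠ (∏_{i ∈ S₂} Q_i) · k₂. -/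
lemma aux_ndc (s B : ℕ) (Q : Fin s → ℕ)
    (hcop : ∀ i j : Fin s, i ≠ j → Nat.Coprime (Q i) (Q j))
    (hQ : ∀ i : Fin s, B < Q i)
    (S₁ S₂ : Finset (Fin s)) (i : Fin s) (hi₁ : i ∈ S₁) (hi₂ : i ∉ S₂)
    (k₁ k₂ : ℕ) (hk₂ : 0 < k₂) (hk₂B : k₂ ≤ B)
    (h : (∏ j ∈ S₁, Q j) * k₁ = (∏ j ∈ S₂, Q j) * k₂) : False := by
  have hdvd : Q i ∣ (∏ j ∈ S₂, Q j) * k₂ := by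
    rw [← h]
    exact Dvd.dvd.mul_right (Finset.dvd_prod_of_mem Q hi₁) k₁
  have hco : Nat.Coprime (Q i) (∏ j ∈ S₂, Q j) :=
    Nat.Coprime.prod_right fun j hj => hcop i j (fun e => hi₂ (e ▸ hj))
  have : Q i ∣ k₂ := (Nat.Coprime.dvd_of_dvd_mul_left hco) hdvd
  have := Nat.le_of_dvd hk₂ this
  have := hQ i
  omega

/-- If `Q₁, …, Q_s` are pairwise coprime naturals, each greater than `B ≥ 1`, and
`S₁ ≠ S₂` are subsets of indices, then for positive `k₁, k₂ ≤ B` the products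
`(∏_{i ∈ S₁} Q_i) * k₁` and `(∏_{i ∈ S₂} Q_i) * k₂` are distinct. -/
theorem no_double_counting (s B : ℕ) (hB : 1 ≤ B) (Q : Fin s → ℕ)
    (hcop : ∀ i j : Fin s, i ≠ j → Nat.Coprime (Q i) (Q j))
    (hQ : ∀ i : Fin s, B < Q i)
    (S₁ S₂ : Finset (Fin s)) (hne : S₁ ≠ S₂)
    (k₁ k₂ : ℕ) (hk₁ : 0 < k₁) (hk₁B : k₁ ≤ B) (hk₂ : 0 < k₂) (hk₂B : k₂ ≤ B) :
    (∏ i ∈ S₁, Q i) * k₁ ≠ (∏ i ∈ S₂, Q i) * k₂ := by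
  intro h
  rcases Finset.not_subset.mp (fun hs => hne (Finset.Subset.antisymm hs (fun x hx => by
      by_contra hx1
      exact aux_ndc s B Q hcop hQ S₂ S₁ x hx hx1 k₂ k₁ hk₁ hk₁B h.symm)))
    with ⟨i, hi₁, hi₂⟩
  exact aux_ndc s B Q hcop hQ S₁ S₂ i hi₁ hi₂ k₁ k₂ hk₂ hk₂B h
end

section
/- Let a be an integer, let M be a positive natural number, let P be a prime natural number with P − a = M (as integers), and let n′ be a positive natural number such that M divides n′ − 1 and such that for every prime p dividing n′, the integer p − a divides M. Then the number n = P · n′ satisfies: for every prime p dividing n, the integer p − a divides the integer n − a. -/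
/-- If `P` is prime with `P - a = M`, `n'` is positive with `M ∣ n' - 1`, and for
every prime `p ∣ n'` the integer `p - a` divides `M`, then `n = P * n'` satisfies
`p - a ∣ n - a` for every prime `p ∣ n`. -/
theorem construct_a_carmichael (a : ℤ) (M : ℕ) (hM : 0 < M)
    (P : ℕ) (hP : P.Prime) (hPa : (P : ℤ) - a = (M : ℤ))
    (n' : ℕ) (hn' : 0 < n') (hdvd : (M : ℤ) ∣ (n' : ℤ) - 1)
    (hfac : ∀ p : ℕ, p.Prime → p ∣ n' → (p : ℤ) - a ∣ (M : ℤ)) :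
    ∀ p : ℕ, p.Prime → p ∣ P * n' → (p : ℤ) - a ∣ ((P * n' : ℕ) : ℤ) - a := by
  intro p hp hpd
  have hMn : (M : ℤ) ∣ ((P * n' : ℕ) : ℤ) - a := by
    have : ((P * n' : ℕ) : ℤ) - a = (M : ℤ) * n' + a * ((n' : ℤ) - 1) := by
      push_cast
      have : (P : ℤ) = M + a := by linarith
      rw [this]; ring
    rw [this]
    exact dvd_add (Dvd.intro _ rfl) (Dvd.dvd.mul_left hdvd a)
  have hpa : (p : ℤ) - a ∣ (M : ℤ) := by
    rcases (Nat.Prime.dvd_mul hp).mp hpd with h | h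
    · have : p = P := (Nat.prime_dvd_prime_iff_eq hp hP).mp h
      subst this; rw [hPa]
    · exact hfac p hp h
  exact hpa.trans hMn
end
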